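/- arXiv:1203.4873 — 2 statements merged into one kernel-verified Lean document; each statement's English description precedes it below -/
import Mathlib

section
/- For every t ≥ 0 the constant K_{√t} = (∫_ℝ e^{√t·|z|} p_1(z) dz)^{1/2} is finite, and for every f ∈ 𝒳₀ the function T_t f belongs to 𝒳₀ with ‖T_t f‖₀ ≤ K_{√t} ‖f‖₀. In particular each T_t is a bounded linear operator on 𝒳₀. -/
/-! For `t ≥ 0` one has `T_t f(x) = ∫ f(x - u) dγ_t(u)`, where `γ_t` is the centred Gaussian of
variance `t` (the Dirac mass at `0` when `t = 0`). Jensen's inequality gives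
`(T_t f x)² ≤ ∫ f(x - u)² dγ_t(u)`; integrating against `e^{-|x|}`, exchanging the integrals,
translating and using `e^{-|y + u|} ≤ e^{|u|} e^{-|y|}` bounds `‖T_t f‖₀²` by
`(∫ e^{|u|} dγ_t) ‖f‖₀²`, and `∫ e^{|u|} dγ_t = K_{√t}²` after rescaling `γ_t` to `γ_1`. -/

open MeasureTheory Real Filter Topology

/-- The heat kernel `p_t(x) = (2πt)^{-1/2} exp(-x²/(2t))`. -/
noncomputable def heatKernel (t x : ℝ) : ℝ :=
  (Real.sqrt (2 * Real.pi * t))⁻¹ * Real.exp (-(x ^ 2) / (2 * t))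

/-- The Brownian (heat) semigroup `T_t f(x) = ∫ p_t(x-y) f(y) dy`, with `T_0 f = f`. -/
noncomputable def heatOp (t : ℝ) (f : ℝ → ℝ) (x : ℝ) : ℝ :=
  if t = 0 then f x else ∫ y : ℝ, heatKernel t (x - y) * f y

open ProbabilityTheory NNReal

theorem ofReal_sq_integral_le_lintegral {α : Type*} [MeasurableSpace α] {μ : Measure α}
    [IsProbabilityMeasure μ] (g : α → ℝ) :
    ENNReal.ofReal ((∫ a, g a ∂μ) ^ 2) ≤ ∫⁻ a, ENNReal.ofReal (g a ^ 2) ∂μ := by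
  have hsq (r : ℝ) : ENNReal.ofReal (r ^ 2) = ‖r‖ₑ ^ 2 := by
    rw [Real.enorm_eq_ofReal_abs, ← ENNReal.ofReal_pow (abs_nonneg r), sq_abs]
  by_cases hg : AEStronglyMeasurable g μ
  · simp only [hsq]
    calc ‖∫ a, g a ∂μ‖ₑ ^ 2 ≤ eLpNorm g 1 μ ^ 2 := by
          rw [eLpNorm_one_eq_lintegral_enorm]
          gcongr
          exact enorm_integral_le_lintegral_enorm g
      _ ≤ eLpNorm g 2 μ ^ 2 := by
          gcongr
          exact eLpNorm_le_eLpNorm_of_exponent_le (by norm_num) hg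
      _ = ∫⁻ a, ‖g a‖ₑ ^ 2 ∂μ := by
          simpa using eLpNorm_nnreal_pow_eq_lintegral (f := g) (μ := μ) (p := 2) (by norm_num)
  · simp [integral_non_aestronglyMeasurable hg]

theorem exp_neg_abs_add_le (y u : ℝ) : exp (-|y + u|) ≤ exp |u| * exp (-|y|) := by
  rw [← exp_add, exp_le_exp]
  have := abs_add_le (y + u) (-u)
  rw [abs_neg, add_neg_cancel_right] at this
  linarith

section Convolution

variable (γ : Measure ℝ) [IsProbabilityMeasure γ] {f : ℝ → ℝ}

theorem lintegral_sq_integral_sub_mul_exp_neg_abs_le (hf : Measurable f) :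
    ∫⁻ x, ENNReal.ofReal ((∫ u, f (x - u) ∂γ) ^ 2 * exp (-|x|)) ≤
      (∫⁻ u, ENNReal.ofReal (exp |u|) ∂γ) * ∫⁻ y, ENNReal.ofReal (f y ^ 2 * exp (-|y|)) := by
  have hmeas : Measurable fun p : ℝ × ℝ => ENNReal.ofReal (f (p.1 - p.2) ^ 2 * exp (-|p.1|)) := by
    fun_prop
  calc ∫⁻ x, ENNReal.ofReal ((∫ u, f (x - u) ∂γ) ^ 2 * exp (-|x|))
      ≤ ∫⁻ x, ∫⁻ u, ENNReal.ofReal (f (x - u) ^ 2 * exp (-|x|)) ∂γ := by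
        gcongr with x
        simp only [ENNReal.ofReal_mul (sq_nonneg _)]
        rw [lintegral_mul_const _ (by fun_prop)]
        gcongr
        exact ofReal_sq_integral_le_lintegral _
    _ = ∫⁻ u, (∫⁻ x, ENNReal.ofReal (f (x - u) ^ 2 * exp (-|x|))) ∂γ :=
        lintegral_lintegral_swap hmeas.aemeasurable
    _ = ∫⁻ u, (∫⁻ y, ENNReal.ofReal (f y ^ 2 * exp (-|y + u|))) ∂γ := by
        congr 1 with u
        rw [← lintegral_add_right_eq_self _ u]
        simp only [add_sub_cancel_right]
    _ ≤ ∫⁻ u, ENNReal.ofReal (exp |u|) * (∫⁻ y, ENNReal.ofReal (f y ^ 2 * exp (-|y|))) ∂γ := by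
        gcongr with u
        rw [← lintegral_const_mul _ (by fun_prop)]
        gcongr with y
        rw [← ENNReal.ofReal_mul (exp_nonneg _), mul_left_comm]
        gcongr
        exact exp_neg_abs_add_le y u
    _ = _ := lintegral_mul_const _ (by fun_prop)

theorem integrable_and_integral_sq_integral_sub_mul_exp_neg_abs_le (hf : Measurable f)
    (hf₂ : Integrable fun x => f x ^ 2 * exp (-|x|)) (hγ : Integrable (fun u => exp |u|) γ) :
    Integrable (fun x => (∫ u, f (x - u) ∂γ) ^ 2 * exp (-|x|)) ∧
      ∫ x, (∫ u, f (x - u) ∂γ) ^ 2 * exp (-|x|) ≤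
        (∫ u, exp |u| ∂γ) * ∫ y, f y ^ 2 * exp (-|y|) := by
  have hnonneg : 0 ≤ᵐ[volume] fun x => (∫ u, f (x - u) ∂γ) ^ 2 * exp (-|x|) :=
    ae_of_all _ fun x => by positivity
  have hbound := lintegral_sq_integral_sub_mul_exp_neg_abs_le γ hf
  rw [← ofReal_integral_eq_lintegral_ofReal hγ (ae_of_all _ fun u => (exp_pos _).le),
    ← ofReal_integral_eq_lintegral_ofReal hf₂ (ae_of_all _ fun y => by positivity),
    ← ENNReal.ofReal_mul (integral_nonneg fun u => (exp_pos _).le)] at hbound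
  have hmeas : StronglyMeasurable fun x => ∫ u, f (x - u) ∂γ :=
    (hf.comp (measurable_fst.sub measurable_snd)).stronglyMeasurable.integral_prod_right'
  have hint : Integrable fun x => (∫ u, f (x - u) ∂γ) ^ 2 * exp (-|x|) :=
    ⟨(hmeas.measurable.pow_const 2 |>.mul (by fun_prop)).aestronglyMeasurable,
      (hasFiniteIntegral_iff_ofReal hnonneg).2 (hbound.trans_lt ENNReal.ofReal_lt_top)⟩
  refine ⟨hint, ?_⟩
  rw [← ofReal_integral_eq_lintegral_ofReal hint hnonneg] at hbound
  exact (ENNReal.ofReal_le_ofReal_iff (by positivity)).1 hbound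

end Convolution

theorem integrable_exp_mul_abs_gaussianReal (μ : ℝ) (v : ℝ≥0) (c : ℝ) :
    Integrable (fun x => exp (c * |x|)) (gaussianReal μ v) := by
  refine ((integrable_exp_mul_gaussianReal c).add (integrable_exp_mul_gaussianReal (-c))).mono'
    (by fun_prop) (ae_of_all _ fun x => ?_)
  rw [norm_of_nonneg (exp_pos _).le]
  simp only [Pi.add_apply]
  rcases abs_choice x with h | h <;> rw [h]
  · linarith [exp_pos (-c * x)]
  · rw [mul_neg, ← neg_mul]
    linarith [exp_pos (c * x)]

theorem integrable_mul_gaussianPDFReal_iff {μ : ℝ} {v : ℝ≥0} (hv : v ≠ 0) {g : ℝ → ℝ} :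
    Integrable (fun x => g x * gaussianPDFReal μ v x) ↔ Integrable g (gaussianReal μ v) := by
  rw [gaussianReal_of_var_ne_zero _ hv, integrable_withDensity_iff (measurable_gaussianPDF _ _)
    (ae_of_all _ fun _ => gaussianPDF_lt_top)]
  simp only [toReal_gaussianPDF]

theorem gaussianReal_map_sqrt_mul (v : ℝ≥0) :
    (gaussianReal 0 1).map (√(v : ℝ) * ·) = gaussianReal 0 v := by
  rw [gaussianReal_map_const_mul, mul_zero, mul_one]
  congr
  exact sq_sqrt v.coe_nonneg

theorem integral_exp_abs_gaussianReal (v : ℝ≥0) :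
    ∫ u, exp |u| ∂gaussianReal 0 v = ∫ z, exp (√(v : ℝ) * |z|) ∂gaussianReal 0 1 := by
  rw [← gaussianReal_map_sqrt_mul, integral_map (by fun_prop) (by fun_prop)]
  simp [abs_mul, abs_of_nonneg (sqrt_nonneg _)]

theorem heatKernel_eq_gaussianPDFReal {t : ℝ} (ht : 0 ≤ t) :
    heatKernel t = gaussianPDFReal 0 t.toNNReal := by
  ext x
  simp [heatKernel, gaussianPDFReal, ht]

theorem heatOp_eq_integral_gaussianReal {t : ℝ} (ht : 0 ≤ t) (f : ℝ → ℝ) (x : ℝ) :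
    heatOp t f x = ∫ u, f (x - u) ∂gaussianReal 0 t.toNNReal := by
  rcases ht.eq_or_lt with rfl | ht₀
  · simp [heatOp, gaussianReal_zero_var]
  · rw [heatOp, if_neg ht₀.ne', integral_gaussianReal_eq_integral_smul (by simpa using ht₀),
      ← integral_sub_left_eq_self _ volume x]
    simp [heatKernel_eq_gaussianPDFReal ht]

/-- For every `t ≥ 0` the constant `K_{√t} = (∫ e^{√t·|z|} p_1(z) dz)^{1/2}` is finite, and
for every `f ∈ 𝒳₀ = L²(ℝ, e^{-|x|}dx)` the function `T_t f` belongs to `𝒳₀` with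
`‖T_t f‖₀ ≤ K_{√t} ‖f‖₀`. -/
theorem heatOp_bounded_on_X0 (t : ℝ) (ht : 0 ≤ t) :
    Integrable (fun z : ℝ => Real.exp (Real.sqrt t * |z|) * heatKernel 1 z) ∧
    ∀ f : ℝ → ℝ, Measurable f →
      Integrable (fun x : ℝ => f x ^ 2 * Real.exp (-|x|)) →
      Integrable (fun x : ℝ => heatOp t f x ^ 2 * Real.exp (-|x|)) ∧
      Real.sqrt (∫ x : ℝ, heatOp t f x ^ 2 * Real.exp (-|x|)) ≤
        Real.sqrt (∫ z : ℝ, Real.exp (Real.sqrt t * |z|) * heatKernel 1 z) *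
          Real.sqrt (∫ x : ℝ, f x ^ 2 * Real.exp (-|x|)) := by
  have hp₁ : heatKernel 1 = gaussianPDFReal 0 1 := by
    simpa using heatKernel_eq_gaussianPDFReal zero_le_one
  have hK : ∫ z, exp (√t * |z|) * heatKernel 1 z = ∫ u, exp |u| ∂gaussianReal 0 t.toNNReal := by
    rw [integral_exp_abs_gaussianReal, coe_toNNReal _ ht,
      integral_gaussianReal_eq_integral_smul one_ne_zero, hp₁]
    simp_rw [smul_eq_mul, mul_comm]
  refine ⟨?_, fun f hf hf₂ => ?_⟩
  · rw [hp₁, integrable_mul_gaussianPDFReal_iff one_ne_zero]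
    exact integrable_exp_mul_abs_gaussianReal 0 1 √t
  simp only [heatOp_eq_integral_gaussianReal ht]
  obtain ⟨hint, hle⟩ := integrable_and_integral_sq_integral_sub_mul_exp_neg_abs_le _ hf hf₂
    (by simpa using integrable_exp_mul_abs_gaussianReal 0 t.toNNReal 1)
  refine ⟨hint, ?_⟩
  rw [hK, ← sqrt_mul (integral_nonneg fun _ => (exp_pos _).le)]
  exact sqrt_le_sqrt hle
end

section
/- Let w : ℝ → (0,∞) be twice continuously differentiable and strictly positive, and suppose there is a constant C ≥ 0 such that |w''(x)| ≤ C·w(x) for all x ∈ ℝ. Then for every twice continuously differentiable u : ℝ → ℝ with compact support, ∫_ℝ u''(x) u(x) w(x) dx ≤ (C/2) ∫_ℝ u(x)² w(x) dx. -/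
/-!
The flux `u' u w - u² w' / 2` has compact support and derivative
`u'' u w + (u')² w - u² w'' / 2`, so `∫ u'' u w = - ∫ (u')² w + (1/2) ∫ u² w''`.
The first term is nonpositive because `w > 0`, and the second is at most `(C/2) ∫ u² w`
because `w'' ≤ C w`.
-/

open MeasureTheory Real Filter Topology

theorem Continuous.integrable_of_eq_zero_of_hasCompactSupport {α β E : Type*}
    [TopologicalSpace α] [MeasurableSpace α] [OpensMeasurableSpace α] {μ : Measure α}
    [IsFiniteMeasureOnCompacts μ] [Zero β] [NormedAddCommGroup E] {f : α → β} {g : α → E}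
    (hg : Continuous g) (hf : HasCompactSupport f) (h : ∀ x, f x = 0 → g x = 0) :
    Integrable g μ :=
  hg.integrable_of_hasCompactSupport (hf.mono fun x hx hfx => hx (h x hfx))

section WeightedEnergy

variable {u w : ℝ → ℝ}

noncomputable def weightedEnergyFlux (u w : ℝ → ℝ) (x : ℝ) : ℝ :=
  deriv u x * u x * w x - u x ^ 2 * deriv w x / 2

theorem hasDerivAt_weightedEnergyFlux (hu : ContDiff ℝ 2 u) (hw : ContDiff ℝ 2 w) (x : ℝ) :
    HasDerivAt (weightedEnergyFlux u w)
      (deriv (deriv u) x * u x * w x + deriv u x ^ 2 * w x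
        - u x ^ 2 * deriv (deriv w) x / 2) x := by
  have hu' : HasDerivAt u (deriv u x) x := (hu.differentiable two_ne_zero x).hasDerivAt
  have hw' : HasDerivAt w (deriv w x) x := (hw.differentiable two_ne_zero x).hasDerivAt
  have hu'' : HasDerivAt (deriv u) (deriv (deriv u) x) x :=
    (hu.deriv'.differentiable one_ne_zero x).hasDerivAt
  have hw'' : HasDerivAt (deriv w) (deriv (deriv w) x) x :=
    (hw.deriv'.differentiable one_ne_zero x).hasDerivAt
  exact ((hu''.fun_mul hu').fun_mul hw' |>.sub ((hu'.fun_pow 2).fun_mul hw'' |>.div_const 2))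
    |>.congr_deriv (by ring)

theorem integral_deriv_deriv_mul_mul_eq (hu : ContDiff ℝ 2 u) (hsupp : HasCompactSupport u)
    (hw : ContDiff ℝ 2 w) :
    ∫ x, deriv (deriv u) x * u x * w x
      = -(∫ x, deriv u x ^ 2 * w x) + (∫ x, u x ^ 2 * deriv (deriv w) x) / 2 := by
  have cu := hu.continuous
  have cw := hw.continuous
  have cu' := hu.continuous_deriv one_le_two
  have cw' := hw.continuous_deriv one_le_two
  have cu'' := hu.deriv'.continuous_deriv le_rfl
  have cw'' := hw.deriv'.continuous_deriv le_rfl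
  have i1 : Integrable fun x => deriv (deriv u) x * u x * w x :=
    (by fun_prop : Continuous _).integrable_of_eq_zero_of_hasCompactSupport hsupp
      fun x hx => by simp [hx]
  have i2 : Integrable fun x => deriv u x ^ 2 * w x :=
    (by fun_prop : Continuous _).integrable_of_eq_zero_of_hasCompactSupport hsupp.deriv
      fun x hx => by simp [hx]
  have i3 : Integrable fun x => u x ^ 2 * deriv (deriv w) x / 2 :=
    (by fun_prop : Continuous _).integrable_of_eq_zero_of_hasCompactSupport hsupp
      fun x hx => by simp [hx]
  have iflux : Integrable (weightedEnergyFlux u w) :=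
    Continuous.integrable_of_eq_zero_of_hasCompactSupport (by unfold weightedEnergyFlux; fun_prop)
      hsupp fun x hx => by simp [weightedEnergyFlux, hx]
  have hflux := integral_eq_zero_of_hasDerivAt_of_integrable
    (hasDerivAt_weightedEnergyFlux hu hw) ((i1.fun_add i2).sub i3) iflux
  rw [integral_sub (i1.fun_add i2) i3, integral_add i1 i2, integral_div] at hflux
  linarith

end WeightedEnergy

theorem weighted_energy_inequality_general (w : ℝ → ℝ) (hw : ContDiff ℝ 2 w)
    (hwpos : ∀ x : ℝ, 0 < w x) (C : ℝ)
    (hbound : ∀ x : ℝ, |deriv (deriv w) x| ≤ C * w x)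
    (u : ℝ → ℝ) (hu : ContDiff ℝ 2 u) (hsupp : HasCompactSupport u) :
    ∫ x : ℝ, deriv (deriv u) x * u x * w x ≤ (C / 2) * ∫ x : ℝ, u x ^ 2 * w x := by
  have hkinetic : 0 ≤ ∫ x, deriv u x ^ 2 * w x :=
    integral_nonneg fun x => mul_nonneg (sq_nonneg _) (hwpos x).le
  have hpotential : ∫ x, u x ^ 2 * deriv (deriv w) x ≤ ∫ x, C * (u x ^ 2 * w x) := by
    have cw'' := hw.deriv'.continuous_deriv le_rfl
    have cu := hu.continuous
    have cw := hw.continuous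
    refine integral_mono ?_ ?_ fun x => ?_
    · exact (by fun_prop : Continuous _).integrable_of_eq_zero_of_hasCompactSupport hsupp
        fun x hx => by simp [hx]
    · exact (by fun_prop : Continuous _).integrable_of_eq_zero_of_hasCompactSupport hsupp
        fun x hx => by simp [hx]
    · nlinarith [(abs_le.mp (hbound x)).2, sq_nonneg (u x)]
  rw [integral_const_mul] at hpotential
  rw [integral_deriv_deriv_mul_mul_eq hu hsupp hw]
  linarith

/-- Weighted energy inequality: if `w` is `C²`, strictly positive, with `|w''| ≤ C·w`,
then for every `C²` compactly supported `u`,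
`∫ u'' u w ≤ (C/2) ∫ u² w`. -/
theorem weighted_energy_inequality (w : ℝ → ℝ) (hw : ContDiff ℝ 2 w)
    (hwpos : ∀ x : ℝ, 0 < w x) (C : ℝ) (hC : 0 ≤ C)
    (hbound : ∀ x : ℝ, |deriv (deriv w) x| ≤ C * w x)
    (u : ℝ → ℝ) (hu : ContDiff ℝ 2 u) (hsupp : HasCompactSupport u) :
    ∫ x : ℝ, deriv (deriv u) x * u x * w x ≤ (C / 2) * ∫ x : ℝ, u x ^ 2 * w x :=
  weighted_energy_inequality_general w hw hwpos C hbound u hu hsupp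
end
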